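/- Let B be a braided category, (M, Φ) a B-module category, E a braided B-module structure on (M, Φ), and A, B monoid objects in B. If M ∈ M is an (A ⊗^τ B)-module, with induced A-action ρ_A and B-action ρ_B, then M with the same A-action ρ_A and the modified B-action ρ̂_B := ρ_B ∘ E_{B,M} is a (B ⊗^τ A)-module; that is, ρ̂_B ∘ Φ(B)(ρ_A) = ρ_A ∘ Φ(A)(ρ̂_B) ∘ Φ((τ_{A,B})⁻¹)_M. -/

import Mathlib

open CategoryTheory MonoidalCategory

universe v u v₂ u₂

variable {𝓑 : Type u} [Category.{v} 𝓑] [MonoidalCategory 𝓑] [BraidedCategory 𝓑]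
variable {𝓜 : Type u₂} [Category.{v₂} 𝓜]

/-- A (left) module category over a monoidal category `𝓑`, presented as data: an action
bifunctor together with coherent unit and associativity structure isomorphisms. -/
structure ModuleCategoryStruct (𝓑 : Type u) (𝓜 : Type u₂) [Category.{v} 𝓑]
    [MonoidalCategory 𝓑] [Category.{v₂} 𝓜] where
  act : 𝓑 ⥤ 𝓜 ⥤ 𝓜
  unitIso : act.obj (𝟙_ 𝓑) ≅ 𝟭 𝓜
  assocIso : ∀ X Y : 𝓑, act.obj (X ⊗ Y) ≅ act.obj Y ⋙ act.obj X
  assoc_natural : ∀ {X X' Y Y' : 𝓑} (f : X ⟶ X') (g : Y ⟶ Y'),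
    act.map (f ⊗ₘ g) ≫ (assocIso X' Y').hom =
      (assocIso X Y).hom ≫ CategoryTheory.Functor.whiskerRight (act.map g) (act.obj X) ≫
        CategoryTheory.Functor.whiskerLeft (act.obj Y') (act.map f)
  pentagon : ∀ X Y Z : 𝓑,
    (assocIso (X ⊗ Y) Z).hom ≫ CategoryTheory.Functor.whiskerLeft (act.obj Z) (assocIso X Y).hom =
      act.map (α_ X Y Z).hom ≫ (assocIso X (Y ⊗ Z)).hom ≫
        CategoryTheory.Functor.whiskerRight (assocIso Y Z).hom (act.obj X)
  triangle_right : ∀ X : 𝓑,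
    act.map (ρ_ X).hom =
      (assocIso X (𝟙_ 𝓑)).hom ≫ CategoryTheory.Functor.whiskerRight unitIso.hom (act.obj X)
  triangle_left : ∀ X : 𝓑,
    act.map (λ_ X).hom =
      (assocIso (𝟙_ 𝓑) X).hom ≫ CategoryTheory.Functor.whiskerLeft (act.obj X) unitIso.hom

namespace ModuleCategoryStruct

variable (D : ModuleCategoryStruct 𝓑 𝓜)

/-- Notation helper: the action of `X : 𝓑` on `m : 𝓜`. -/
def smul (X : 𝓑) (m : 𝓜) : 𝓜 := (D.act.obj X).obj m

/-- A braided `𝓑`-module structure on a module category `(𝓜, Φ)`: a family of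
isomorphisms `E_{X,m} : X·m ⟶ X·m`, natural in `X` and `m`, satisfying (C1) and (C2). -/
structure BraidedModuleStructure where
  E : ∀ (X : 𝓑) (m : 𝓜), D.smul X m ⟶ D.smul X m
  iso : ∀ (X : 𝓑) (m : 𝓜), IsIso (E X m)
  nat_left : ∀ {X X' : 𝓑} (f : X ⟶ X') (m : 𝓜),
    (D.act.map f).app m ≫ E X' m = E X m ≫ (D.act.map f).app m
  nat_right : ∀ (X : 𝓑) {m m' : 𝓜} (g : m ⟶ m'),
    (D.act.obj X).map g ≫ E X m' = E X m ≫ (D.act.obj X).map g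
  C1 : ∀ (X Y : 𝓑) (m : 𝓜),
    E Y (D.smul X m) =
      (D.assocIso Y X).inv.app m ≫ (D.act.map (β_ X Y).inv).app m ≫
        (D.assocIso X Y).hom.app m ≫ (D.act.obj X).map (E Y m) ≫
        (D.assocIso X Y).inv.app m ≫ (D.act.map (β_ Y X).inv).app m ≫
        (D.assocIso Y X).hom.app m
  C2 : ∀ (X Y : 𝓑) (m : 𝓜),
    E (Y ⊗ X) m =
      (D.assocIso Y X).hom.app m ≫ (D.act.obj Y).map (E X m) ≫ E Y (D.smul X m) ≫
        (D.assocIso Y X).inv.app m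

/-- A stable structure on a braided `𝓑`-module: a natural automorphism `ς` of the
identity functor of `𝓜` with `E_{X,m} = ς_{X·m} ∘ Φ(X)(ς_m)⁻¹`. -/
structure StableStructure (Eb : D.BraidedModuleStructure) where
  ς : ∀ m : 𝓜, m ≅ m
  natural : ∀ {m m' : 𝓜} (g : m ⟶ m'), (ς m).hom ≫ g = g ≫ (ς m').hom
  stability : ∀ (X : 𝓑) (m : 𝓜),
    Eb.E X m = (D.act.obj X).map (ς m).inv ≫ (ς (D.smul X m)).hom

/-- An `A`-module in `𝓜`, for a monoid object `A` in `𝓑`: an object `m` with a unital,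
associative action `ρ : A·m ⟶ m`. -/
structure IsModuleObject (A : Mon 𝓑) (m : 𝓜) (ρ : D.smul A.X m ⟶ m) : Prop where
  unital : (D.act.map A.mon.one).app m ≫ ρ = D.unitIso.hom.app m
  assoc : (D.assocIso A.X A.X).hom.app m ≫ (D.act.obj A.X).map ρ ≫ ρ =
    (D.act.map A.mon.mul).app m ≫ ρ

end ModuleCategoryStruct

open ModuleCategoryStruct

/-- Compatibility of an `X`-action and a `Y`-action making `m` an `(X ⊗^τ Y)`-module:
`ρ_X ∘ Φ(X)(ρ_Y) = ρ_Y ∘ Φ(Y)(ρ_X) ∘ Φ((τ_{Y,X})⁻¹)_m`. -/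
def ActionsCompatible (D : ModuleCategoryStruct 𝓑 𝓜) (X Y : 𝓑) (m : 𝓜)
    (ρX : D.smul X m ⟶ m) (ρY : D.smul Y m ⟶ m) : Prop :=
  (D.assocIso X Y).hom.app m ≫ (D.act.obj X).map ρY ≫ ρX =
    (D.act.map (β_ Y X).inv).app m ≫ (D.assocIso Y X).hom.app m ≫
      (D.act.obj Y).map ρX ≫ ρY

/-!
Naturality of `E` in the module variable moves `E_{Y,m}` across `Φ(Y)(ρ_X)`. Axiom (C1)
rewrites the resulting `E_{Y,X·m}` as `Φ(X)(E_{Y,m})` conjugated by inverse braidings; the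
inner conjugating factor `Φ((τ_{Y,X})⁻¹)` followed by `Φ(Y)(ρ_X) ≫ ρ_Y` is exactly the
right-hand side of the compatibility of `ρ_X` and `ρ_Y`, which can therefore be replaced by
`ρ_X ∘ Φ(X)(ρ_Y)`, leaving `ρ_X ∘ Φ(X)(ρ_Y ∘ E_{Y,m}) ∘ Φ((τ_{X,Y})⁻¹)`.
-/

namespace ModuleCategoryStruct.BraidedModuleStructure

variable {D : ModuleCategoryStruct 𝓑 𝓜} (Eb : D.BraidedModuleStructure)

/- `D.smul X m` and `(D.act.obj X).obj m` agree only after unfolding `smul`, so these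
composites typecheck only up to that unfolding; rewriting therefore uses `erw`. -/

theorem nat_right_assoc (X : 𝓑) {m m' Z : 𝓜} (g : m ⟶ m') (f : D.smul X m' ⟶ Z) :
    (D.act.obj X).map g ≫ Eb.E X m' ≫ f = Eb.E X m ≫ (D.act.obj X).map g ≫ f :=
  (Category.assoc _ _ _).symm.trans ((Eb.nat_right X g =≫ f).trans (Category.assoc _ _ _))

theorem assocIso_hom_app_comp_E_assoc (X Y : 𝓑) (m : 𝓜) {Z : 𝓜}
    (f : D.smul Y (D.smul X m) ⟶ Z) :
    (D.assocIso Y X).hom.app m ≫ Eb.E Y (D.smul X m) ≫ f =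
      (D.act.map (β_ X Y).inv).app m ≫ (D.assocIso X Y).hom.app m ≫
        (D.act.obj X).map (Eb.E Y m) ≫ (D.assocIso X Y).inv.app m ≫
        (D.act.map (β_ Y X).inv).app m ≫ (D.assocIso Y X).hom.app m ≫ f := by
  rw [Eb.C1]
  erw [Category.assoc, Iso.hom_inv_id_app_assoc]
  repeat erw [Category.assoc]
  rfl

theorem actionsCompatible_swap {X Y : 𝓑} {m : 𝓜} {ρX : D.smul X m ⟶ m}
    {ρY : D.smul Y m ⟶ m} (h : ActionsCompatible D X Y m ρX ρY) :
    ActionsCompatible D Y X m (Eb.E Y m ≫ ρY) ρX := by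
  unfold ActionsCompatible at h ⊢
  erw [nat_right_assoc, assocIso_hom_app_comp_E_assoc, ← h, Iso.inv_hom_id_app_assoc,
    Functor.map_comp, Category.assoc]
  rfl

end ModuleCategoryStruct.BraidedModuleStructure

theorem twisted_action_swaps_module_structure_general
    (D : ModuleCategoryStruct 𝓑 𝓜) (Eb : D.BraidedModuleStructure)
    (A B : Mon 𝓑) (m : 𝓜) (ρA : D.smul A.X m ⟶ m) (ρB : D.smul B.X m ⟶ m)
    (hAB : ActionsCompatible D A.X B.X m ρA ρB) :
    ActionsCompatible D B.X A.X m (Eb.E B.X m ≫ ρB) ρA :=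
  Eb.actionsCompatible_swap hAB

/-- if `m` is an `(A ⊗^τ B)`-module, with induced `A`-action `ρA` and
`B`-action `ρB`, then `m` with the same `A`-action and the modified `B`-action
`ρ̂B := ρB ∘ E_{B,m}` is a `(B ⊗^τ A)`-module; that is,
`ρ̂_B ∘ Φ(B)(ρ_A) = ρ_A ∘ Φ(A)(ρ̂_B) ∘ Φ((τ_{A,B})⁻¹)_m`. -/
theorem twisted_action_swaps_module_structure
    (D : ModuleCategoryStruct 𝓑 𝓜) (Eb : D.BraidedModuleStructure)
    (A B : Mon 𝓑) (m : 𝓜) (ρA : D.smul A.X m ⟶ m) (ρB : D.smul B.X m ⟶ m)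
    (hA : D.IsModuleObject A m ρA) (hB : D.IsModuleObject B m ρB)
    (hAB : ActionsCompatible D A.X B.X m ρA ρB) :
    ActionsCompatible D B.X A.X m (Eb.E B.X m ≫ ρB) ρA :=
  twisted_action_swaps_module_structure_general D Eb A B m ρA ρB hAB
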